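/- arXiv:math/0701639 — 2 statements merged into one kernel-verified Lean document; each statement's English description precedes it below -/
import Mathlib

section
/- Let f : Δ → Δ be a holomorphic self-map of a bounded domain in ℂ^k and suppose some subsequence of the iterates f^{n_i} converges locally uniformly to the identity map of Δ. Then f is injective on Δ and f(Δ) = Δ, i.e. f is an automorphism of Δ. -/
/-!
Injectivity: if `f a = f b` then `f^[n i] a = f^[n i] b` for all large `i`, and these converge to
`a` and `b` respectively.

Surjectivity: near a point `y ∈ Δ` some iterate `g = f^[n i]` is uniformly close to the identity
on a ball. By the Schwarz lemma applied on complex lines, the holomorphic map `g - id` is then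
Lipschitz with constant `1/2` on a smaller ball, so `g` is a small perturbation of the identity
there and hits `y` (the surjectivity half of the inverse function theorem). Hence
`y = f (f^[n i - 1] x) ∈ f '' Δ`.
-/

open Set Filter Metric Topology

theorem injOn_of_tendsto_iterate {α ι : Type*} [TopologicalSpace α] [T2Space α] {f : α → α}
    {s : Set α} {p : Filter ι} [p.NeBot] {n : ι → ℕ} (hn : Tendsto n p atTop)
    (h : ∀ x ∈ s, Tendsto (fun i => f^[n i] x) p (𝓝 x)) : InjOn f s := by
  intro a ha b hb hab
  refine tendsto_nhds_unique (h a ha) ((h b hb).congr' ?_)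
  filter_upwards [hn.eventually_ge_atTop 1] with i hi
  rw [← Function.iterate_pred_comp_of_pos f hi, Function.comp_apply, Function.comp_apply, hab]

section Holomorphic

variable {E F : Type*} [NormedAddCommGroup E] [NormedSpace ℂ E]
  [NormedAddCommGroup F] [NormedSpace ℂ F]

theorem norm_sub_le_of_differentiableOn_ball_of_norm_sub_lt {u : E → F} {y x₁ x₂ : E}
    {r ρ M : ℝ} (hu : DifferentiableOn ℂ u (ball y ρ)) (hM : ∀ x ∈ ball y ρ, ‖u x‖ ≤ M)
    (h₂ : ‖x₂ - y‖ ≤ r) (hnear : ‖x₁ - x₂‖ < ρ - r) :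
    ‖u x₁ - u x₂‖ ≤ 2 * M / (ρ - r) * ‖x₁ - x₂‖ := by
  rcases eq_or_ne x₁ x₂ with rfl | hne
  · simp
  set d := ‖x₁ - x₂‖
  have hd : 0 < d := norm_sub_pos_iff.2 hne
  set R := (ρ - r) / d
  set φ : ℂ → F := fun t => u (x₂ + t • (x₁ - x₂))
  have hline : MapsTo (fun t : ℂ => x₂ + t • (x₁ - x₂)) (ball 0 R) (ball y ρ) := by
    intro t ht
    rw [mem_ball, dist_zero_right, lt_div_iff₀ hd] at ht
    rw [mem_ball, dist_eq_norm, add_sub_right_comm]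
    calc ‖x₂ - y + t • (x₁ - x₂)‖ ≤ ‖x₂ - y‖ + ‖t‖ * d := (norm_add_le _ _).trans_eq
          (by rw [norm_smul])
      _ < ρ := by linarith
  have hφ : DifferentiableOn ℂ φ (ball 0 R) := hu.comp (by fun_prop) hline
  have hφmaps : MapsTo φ (ball 0 R) (closedBall (φ 0) (2 * M)) := by
    intro t ht
    rw [mem_closedBall, dist_eq_norm]
    have := hM _ (hline ht)
    have := hM _ (hline (mem_ball_self (div_pos (hd.trans hnear) hd) : (0 : ℂ) ∈ ball 0 R))
    exact (norm_sub_le _ _).trans (by linarith)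
  have h1 : (1 : ℂ) ∈ ball 0 R := by
    rwa [mem_ball, dist_zero_right, norm_one, lt_div_iff₀ hd, one_mul]
  have hschwarz := Complex.dist_le_div_mul_dist_of_mapsTo_ball hφ hφmaps h1
  simp only [φ, one_smul, zero_smul, add_zero, add_sub_cancel, dist_eq_norm, sub_zero, norm_one,
    mul_one] at hschwarz
  calc ‖u x₁ - u x₂‖ ≤ 2 * M / R := hschwarz
    _ = 2 * M / (ρ - r) * d := by simp only [R]; field_simp

theorem norm_sub_le_of_differentiableOn_ball {u : E → F} {y x₁ x₂ : E} {r ρ M : ℝ}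
    (hu : DifferentiableOn ℂ u (ball y ρ)) (hM : ∀ x ∈ ball y ρ, ‖u x‖ ≤ M) (hrρ : r < ρ)
    (h₁ : x₁ ∈ closedBall y r) (h₂ : x₂ ∈ closedBall y r) :
    ‖u x₁ - u x₂‖ ≤ 2 * M / (ρ - r) * ‖x₁ - x₂‖ := by
  have hρr : 0 < ρ - r := sub_pos.2 hrρ
  rcases lt_or_ge ‖x₁ - x₂‖ (ρ - r) with hnear | hfar
  · rw [mem_closedBall, dist_eq_norm] at h₂
    exact norm_sub_le_of_differentiableOn_ball_of_norm_sub_lt hu hM h₂ hnear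
  have hu₁ := hM x₁ (closedBall_subset_ball hrρ h₁)
  have hu₂ := hM x₂ (closedBall_subset_ball hrρ h₂)
  calc ‖u x₁ - u x₂‖ ≤ ‖u x₁‖ + ‖u x₂‖ := norm_sub_le _ _
    _ ≤ 2 * M / (ρ - r) * (ρ - r) := by rw [div_mul_cancel₀ _ hρr.ne']; linarith
    _ ≤ 2 * M / (ρ - r) * ‖x₁ - x₂‖ := by
      gcongr
      exact div_nonneg (by linarith [norm_nonneg (u x₁)]) hρr.le

theorem mem_image_closedBall_of_norm_sub_id_le [CompleteSpace E] {g : E → E} {y : E} {r : ℝ}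
    (hr : 0 < r) (hg : DifferentiableOn ℂ g (ball y (2 * r)))
    (hclose : ∀ x ∈ ball y (2 * r), ‖g x - x‖ ≤ r / 4) : y ∈ g '' closedBall y r := by
  have happrox : ApproximatesLinearOn g (ContinuousLinearMap.id ℂ E) (closedBall y r) (1 / 2) := by
    intro x₁ h₁ x₂ h₂
    have := norm_sub_le_of_differentiableOn_ball (u := fun x => g x - x)
      (hg.sub differentiableOn_id) hclose (by linarith) h₁ h₂
    have hc : 2 * (r / 4) / (2 * r - r) = ((1 / 2 : NNReal) : ℝ) := by
      push_cast; field_simp; ring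
    rw [hc] at this
    simpa only [ContinuousLinearMap.id_apply, sub_sub_sub_comm] using this
  let idInv : (ContinuousLinearMap.id ℂ E).NonlinearRightInverse :=
    ⟨id, 1, fun z => by simp, fun _ => rfl⟩
  refine happrox.surjOn_closedBall_of_nonlinearRightInverse idInv hr.le subset_rfl ?_
  have hy := hclose y (mem_ball_self (by positivity))
  rw [mem_closedBall, dist_eq_norm, norm_sub_rev]
  simp only [idInv, NNReal.coe_one, inv_one]
  push_cast
  linarith

theorem TendstoLocallyUniformlyOn.eventually_mem_image [ProperSpace E] {ι : Type*}
    {p : Filter ι} {g : ι → E → E} {s : Set E} (hs : IsOpen s)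
    (hg : ∀ i, DifferentiableOn ℂ (g i) s) (hconv : TendstoLocallyUniformlyOn g id p s) {y : E}
    (hy : y ∈ s) : ∀ᶠ i in p, y ∈ g i '' s := by
  obtain ⟨ε, hε, hball⟩ := nhds_basis_closedBall.mem_iff.1 (hs.mem_nhds hy)
  have hunif : TendstoUniformlyOn g id p (closedBall y ε) :=
    (tendstoLocallyUniformlyOn_iff_forall_isCompact hs).1 hconv _ hball (isCompact_closedBall _ _)
  filter_upwards [tendstoUniformlyOn_iff.1 hunif (ε / 8) (by positivity)] with i hi
  have hr : 2 * (ε / 2) = ε := by ring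
  refine image_mono (closedBall_subset_closedBall (by linarith) |>.trans hball) <|
    mem_image_closedBall_of_norm_sub_id_le (half_pos hε) ?_ ?_
  · rw [hr]
    exact (hg i).mono (ball_subset_closedBall.trans hball)
  · intro x hx
    rw [hr] at hx
    have := hi x (ball_subset_closedBall hx)
    rw [id, dist_comm, dist_eq_norm] at this
    linarith

end Holomorphic

theorem stmt4_general {k : ℕ} (Δ : Set (Fin k → ℂ)) (f : (Fin k → ℂ) → (Fin k → ℂ))
    (n : ℕ → ℕ)
    (hopen : IsOpen Δ)
    (hf : DifferentiableOn ℂ f Δ) (hmaps : MapsTo f Δ Δ)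
    (hn : StrictMono n)
    (hconv : TendstoLocallyUniformlyOn (fun i => f^[n i]) id atTop Δ) :
    InjOn f Δ ∧ f '' Δ = Δ := by
  refine ⟨injOn_of_tendsto_iterate hn.tendsto_atTop fun x hx => hconv.tendsto_at hx,
    (image_subset_iff.2 hmaps).antisymm fun y hy => ?_⟩
  obtain ⟨i, hi, x, hx, rfl⟩ := ((hn.tendsto_atTop.eventually_ge_atTop 1).and
    (hconv.eventually_mem_image hopen (hf.iterate hmaps <| n ·) hy)).exists
  rw [← Function.comp_iterate_pred_of_pos f hi]
  exact mem_image_of_mem f (hmaps.iterate _ hx)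

/-- Cartan / Siegel-domain alternative: if `Δ ⊆ ℂ^k` is a bounded domain,
`f : Δ → Δ` is holomorphic, and some subsequence of the iterates converges locally
uniformly to the identity on `Δ`, then `f` is an automorphism of `Δ`. -/
theorem stmt4 {k : ℕ} (Δ : Set (Fin k → ℂ)) (f : (Fin k → ℂ) → (Fin k → ℂ))
    (n : ℕ → ℕ)
    (hopen : IsOpen Δ) (hconn : IsConnected Δ) (hbdd : Bornology.IsBounded Δ)
    (hf : DifferentiableOn ℂ f Δ) (hmaps : MapsTo f Δ Δ)
    (hn : StrictMono n)
    (hconv : TendstoLocallyUniformlyOn (fun i => f^[n i]) id atTop Δ) :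
    InjOn f Δ ∧ f '' Δ = Δ :=
  stmt4_general Δ f n hopen hf hmaps hn hconv
end

section
/- Let U be a bounded open subset of ℂ^k containing 0, f : U → ℂ^k holomorphic with f(0) = 0 and A = Df(0) invertible with all eigenvalues of modulus 1 and A diagonalizable (so that the powers A^{-j} are uniformly bounded). Suppose there exist radii 0 < r < R with the closed ball B(0,R) ⊆ U such that f^n(B(0,r)) ⊆ B(0,R) for all n ≥ 0. Then f is linearizable near 0: there exists a holomorphic map h defined on a neighborhood of 0 with h(0) = 0, Dh(0) = Id, and h ∘ f = A ∘ h. -/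
/-!
The Cesàro averages `h_N = (1/N) ∑_{j<N} A⁻ʲ ∘ fʲ` satisfy `h_N 0 = 0`, `Dh_N(0) = Id` and
`h_N ∘ f - A ∘ h_N = (A ∘ A⁻ᴺ ∘ fᴺ - A) / N`. Since the orbits of `B(0,r)` stay in `B(0,R)` and
the powers `A⁻ʲ` are bounded (`A` is diagonalizable with unimodular eigenvalues), the `h_N` are
uniformly bounded on `B(0,r)`, so the error term tends to `0`. By the Cauchy estimates the `h_N` are
equi-Lipschitz on a smaller ball; along an ultrafilter they therefore converge uniformly there, and
the limit `h` is holomorphic with `Dh(0) = lim Dh_N(0) = Id` and `h ∘ f = A ∘ h`.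
-/

open Set Filter Metric Topology

theorem EquicontinuousOn.tendstoUniformlyOn_of_tendsto {ι X α : Type*} [TopologicalSpace X]
    [UniformSpace α] {F : ι → X → α} {f : X → α} {l : Filter ι} {K : Set X}
    (hK : IsCompact K) (hF : EquicontinuousOn F K)
    (hf : ∀ x ∈ K, Tendsto (fun n => F n x) l (𝓝 (f x))) :
    TendstoUniformlyOn F f l K := by
  have h := (EquicontinuousOn.tendsto_uniformOnFun_iff_pi' (𝔖 := {K}) (by simpa) (by simpa) l f).2
    (tendsto_pi_nhds.2 fun x => hf x (by simpa using x.2))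
  exact UniformOnFun.tendsto_iff_tendstoUniformlyOn.1 h K rfl

section Holomorphic

variable {E F : Type*} [NormedAddCommGroup E] [NormedSpace ℂ E]
  [NormedAddCommGroup F] [NormedSpace ℂ F]

theorem norm_fderiv_le_of_forall_norm_le {g : E → F} {c z : E} {ρ M : ℝ}
    (hg : DifferentiableOn ℂ g (ball c ρ)) (hM : ∀ w ∈ ball c ρ, ‖g w‖ ≤ M)
    (hz : z ∈ ball c (ρ / 2)) : ‖fderiv ℂ g z‖ ≤ 4 * M / ρ := by
  have hρ : 0 < ρ / 2 := pos_of_mem_ball hz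
  have hsub : ball z (ρ / 2) ⊆ ball c ρ := ball_subset_ball' (by
    rw [mem_ball] at hz; linarith)
  have hmaps : MapsTo g (ball z (ρ / 2)) (closedBall (g z) (2 * M)) := fun w hw => by
    rw [mem_closedBall, dist_eq_norm]
    linarith [norm_sub_le (g w) (g z), hM w (hsub hw), hM z (hsub (mem_ball_self hρ))]
  calc ‖fderiv ℂ g z‖ ≤ 2 * M / (ρ / 2) :=
        Complex.norm_fderiv_le_div_of_mapsTo_ball (hg.mono hsub) hmaps hρ
    _ = 4 * M / ρ := by field_simp; ring

variable {ι : Type*} {l : Filter ι} {G : ι → E → F} {g : E → F} {c : E} {ρ : ℝ}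

theorem TendstoUniformlyOn.uniformCauchySeqOn_fderiv
    (hG : ∀ n, DifferentiableOn ℂ (G n) (ball c ρ)) (hGg : TendstoUniformlyOn G g l (ball c ρ)) :
    UniformCauchySeqOn (fun n => fderiv ℂ (G n)) l (ball c (ρ / 2)) := by
  intro u hu
  obtain ⟨ε, hε, hεu⟩ := Metric.mem_uniformity_dist.1 hu
  rcases le_or_gt ρ 0 with hρ | hρ
  · exact Eventually.of_forall fun _ z hz => absurd (pos_of_mem_ball hz) (by linarith)
  filter_upwards [hGg.uniformCauchySeqOn _ (dist_mem_uniformity (by positivity : 0 < ε * ρ / 8))]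
    with mn hmn z hz
  have hdiff : ∀ n, DifferentiableAt ℂ (G n) z := fun n =>
    (hG n).differentiableAt (isOpen_ball.mem_nhds (ball_subset_ball (by linarith) hz))
  refine hεu ?_
  rw [dist_eq_norm, ← fderiv_sub (hdiff _) (hdiff _)]
  calc ‖fderiv ℂ (G mn.1 - G mn.2) z‖ ≤ 4 * (ε * ρ / 8) / ρ :=
        norm_fderiv_le_of_forall_norm_le ((hG _).sub (hG _))
          (fun w hw => by simpa [dist_eq_norm] using (hmn w hw).le) hz
    _ < ε := by field_simp; linarith

theorem TendstoUniformlyOn.differentiableAt_and_tendsto_fderiv [CompleteSpace F] [l.NeBot]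
    (hG : ∀ n, DifferentiableOn ℂ (G n) (ball c ρ)) (hGg : TendstoUniformlyOn G g l (ball c ρ))
    {z : E} (hz : z ∈ ball c (ρ / 2)) :
    DifferentiableAt ℂ g z ∧ Tendsto (fun n => fderiv ℂ (G n) z) l (𝓝 (fderiv ℂ g z)) := by
  have hcauchy := hGg.uniformCauchySeqOn_fderiv hG
  choose! G' hG' using fun x (hx : x ∈ ball c (ρ / 2)) =>
    cauchy_map_iff_exists_tendsto.1 (hcauchy.cauchy_map hx)
  have hsub : ball c (ρ / 2) ⊆ ball c ρ := ball_subset_ball (by linarith [pos_of_mem_ball hz])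
  have hg' : HasFDerivAt g (G' z) z :=
    hasFDerivAt_of_tendstoUniformlyOn isOpen_ball (hcauchy.tendstoUniformlyOn_of_tendsto hG')
      (fun n x hx => ((hG n).differentiableAt (isOpen_ball.mem_nhds (hsub hx))).hasFDerivAt)
      (fun x hx => hGg.tendsto_at (hsub hx)) hz
  exact ⟨hg'.differentiableAt, hg'.fderiv ▸ hG' z hz⟩

theorem lipschitzOnWith_of_forall_norm_le {g : E → F} {M : ℝ}
    (hg : DifferentiableOn ℂ g (ball c ρ)) (hM : ∀ w ∈ ball c ρ, ‖g w‖ ≤ M) :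
    LipschitzOnWith (4 * M / ρ).toNNReal g (ball c (ρ / 2)) := by
  have hsub : ball c (ρ / 2) ⊆ ball c ρ := fun z hz =>
    ball_subset_ball (by linarith [pos_of_mem_ball hz]) hz
  refine (convex_ball c _).lipschitzOnWith_of_nnnorm_fderiv_le
    (fun z hz => hg.differentiableAt (isOpen_ball.mem_nhds (hsub hz))) (fun z hz => ?_)
  rw [← NNReal.coe_le_coe, coe_nnnorm]
  exact (norm_fderiv_le_of_forall_norm_le hg hM hz).trans (Real.le_coe_toNNReal _)

/-- Montel's theorem, with an ultrafilter in place of the extraction of a subsequence. -/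
theorem Ultrafilter.exists_tendsto_fderiv_of_forall_norm_le [ProperSpace E] [ProperSpace F]
    (𝒰 : Ultrafilter ι) {M : ℝ} (hρ : 0 < ρ) (hG : ∀ n, DifferentiableOn ℂ (G n) (ball c ρ))
    (hM : ∀ n, ∀ w ∈ ball c ρ, ‖G n w‖ ≤ M) :
    ∃ g : E → F, (∀ z ∈ ball c ρ, Tendsto (fun n => G n z) 𝒰 (𝓝 (g z))) ∧
      ∀ z ∈ ball c (ρ / 8), DifferentiableAt ℂ g z ∧
        Tendsto (fun n => fderiv ℂ (G n) z) 𝒰 (𝓝 (fderiv ℂ g z)) := by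
  choose! g hg using fun z (hz : z ∈ ball c ρ) =>
    (isCompact_closedBall (0 : F) M).ultrafilter_le_nhds (𝒰.map fun n => G n z)
      (le_principal_iff.2 (Filter.mem_map.2
        (univ_mem' fun n => mem_closedBall_zero_iff.2 (hM n z hz))))
  have hK : closedBall c (ρ / 4) ⊆ ball c (ρ / 2) := closedBall_subset_ball (by linarith)
  have hunif : TendstoUniformlyOn G g 𝒰 (ball c (ρ / 4)) := by
    refine (EquicontinuousOn.tendstoUniformlyOn_of_tendsto (isCompact_closedBall c _) ?_
      fun z hz => (hg z ?_).2).mono ball_subset_closedBall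
    · exact (LipschitzOnWith.uniformEquicontinuousOn _ _ fun n =>
        (lipschitzOnWith_of_forall_norm_le (hG n) (hM n)).mono hK).equicontinuousOn
    · exact ball_subset_ball (by linarith) (hK hz)
  refine ⟨g, fun z hz => (hg z hz).2, fun z hz => ?_⟩
  exact hunif.differentiableAt_and_tendsto_fderiv (fun n => (hG n).mono (ball_subset_ball
    (by linarith))) (ball_subset_ball (by linarith) hz)

end Holomorphic

section Eigenbasis

variable {𝕜 E : Type*} [NontriviallyNormedField 𝕜] [NormedAddCommGroup E] [NormedSpace 𝕜 E]

theorem ContinuousLinearMap.mem_spectrum_of_apply_eq_smul {T : E →L[𝕜] E} {μ : 𝕜} {v : E}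
    (hv : v ≠ 0) (hTv : T v = μ • v) : μ ∈ spectrum 𝕜 T := by
  rintro ⟨w, hw⟩
  have hwv : (w : E →L[𝕜] E) v = 0 := by
    simp [hw, hTv, Algebra.algebraMap_eq_smul_one]
  exact hv (by simpa [← mul_apply_eq_comp] using congr((↑w⁻¹ : E →L[𝕜] E) $hwv))

theorem ContinuousLinearMap.units_inv_apply_of_apply_eq_smul {u : (E →L[𝕜] E)ˣ} {μ : 𝕜} {v : E}
    (hμ : μ ≠ 0) (huv : (u : E →L[𝕜] E) v = μ • v) : (↑u⁻¹ : E →L[𝕜] E) v = μ⁻¹ • v := by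
  rw [eq_inv_smul_iff₀ hμ, ← map_smul, ← huv, ← mul_apply_eq_comp, Units.inv_mul,
    one_apply_eq_self]

theorem Module.Basis.repr_pow_apply_of_apply_eq_smul {ι : Type*} (b : Basis ι 𝕜 E)
    {T : E →L[𝕜] E} {μ : ι → 𝕜} (hT : ∀ i, T (b i) = μ i • b i) (n : ℕ) (z : E) (i : ι) :
    b.repr ((T ^ n) z) i = μ i ^ n * b.repr z i := by
  have hTn : ∀ j, (T ^ n) (b j) = μ j ^ n • b j := fun j => by
    induction n with
    | zero => simp
    | succ n ih => rw [pow_succ, mul_apply_eq_comp, hT, map_smul, ih, smul_smul,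
        pow_succ, mul_comm]
  have := b.ext (f₁ := (b.coord i).comp (T ^ n).toLinearMap) (f₂ := μ i ^ n • b.coord i)
    fun j => by
      simp only [LinearMap.comp_apply, ContinuousLinearMap.coe_coe, hTn, map_smul,
        LinearMap.smul_apply, Basis.coord_apply, Basis.repr_self, smul_eq_mul]
      rcases eq_or_ne j i with rfl | hji
      · rfl
      · simp [Finsupp.single_eq_of_ne hji.symm]
  exact LinearMap.congr_fun this z

theorem Module.Basis.exists_norm_pow_le_of_apply_eq_smul [CompleteSpace 𝕜] {ι : Type*}
    [Fintype ι] (b : Basis ι 𝕜 E) {T : E →L[𝕜] E} {μ : ι → 𝕜} (hT : ∀ i, T (b i) = μ i • b i)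
    (hμ : ∀ i, ‖μ i‖ ≤ 1) : ∃ C, ∀ n : ℕ, ‖T ^ n‖ ≤ C := by
  set e := b.equivFunL
  refine ⟨‖(e.symm : (ι → 𝕜) →L[𝕜] E)‖ * ‖(e : E →L[𝕜] ι → 𝕜)‖, fun n => ?_⟩
  refine ContinuousLinearMap.opNorm_le_bound _ (by positivity) fun z => ?_
  have he : ‖e ((T ^ n) z)‖ ≤ ‖e z‖ := by
    refine pi_norm_le_iff_of_nonneg (norm_nonneg _) |>.2 fun i => ?_
    calc ‖e ((T ^ n) z) i‖ = ‖μ i‖ ^ n * ‖e z i‖ := by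
          rw [← norm_pow, ← norm_mul]
          exact congrArg _ (b.repr_pow_apply_of_apply_eq_smul hT n z i)
      _ ≤ 1 * ‖e z‖ := mul_le_mul (pow_le_one₀ (norm_nonneg _) (hμ i)) (norm_le_pi_norm _ i)
          (norm_nonneg _) zero_le_one
      _ = ‖e z‖ := one_mul _
  calc ‖(T ^ n) z‖ = ‖e.symm (e ((T ^ n) z))‖ := by rw [e.symm_apply_apply]
    _ ≤ ‖(e.symm : (ι → 𝕜) →L[𝕜] E)‖ * ‖e z‖ :=
        ((e.symm : (ι → 𝕜) →L[𝕜] E).le_opNorm _).trans (by gcongr)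
    _ ≤ ‖(e.symm : (ι → 𝕜) →L[𝕜] E)‖ * (‖(e : E →L[𝕜] ι → 𝕜)‖ * ‖z‖) := by
        gcongr; exact (e : E →L[𝕜] ι → 𝕜).le_opNorm z
    _ = _ := by ring

theorem Module.Basis.exists_norm_units_inv_pow_le [CompleteSpace 𝕜] {ι : Type*} [Fintype ι]
    (b : Basis ι 𝕜 E) {u : (E →L[𝕜] E)ˣ} (hb : ∀ i, ∃ μ : 𝕜, (u : E →L[𝕜] E) (b i) = μ • b i)
    (hspec : ∀ μ ∈ spectrum 𝕜 (u : E →L[𝕜] E), 1 ≤ ‖μ‖) :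
    ∃ C, ∀ n : ℕ, ‖(↑(u⁻¹ ^ n) : E →L[𝕜] E)‖ ≤ C := by
  choose μ hμ using hb
  have hμ_norm : ∀ i, 1 ≤ ‖μ i‖ := fun i =>
    hspec _ (ContinuousLinearMap.mem_spectrum_of_apply_eq_smul (b.ne_zero i) (hμ i))
  have hμ0 : ∀ i, μ i ≠ 0 := fun i => norm_pos_iff.1 (zero_lt_one.trans_le (hμ_norm i))
  simp only [Units.val_pow_eq_pow_val]
  exact b.exists_norm_pow_le_of_apply_eq_smul
    (fun i => ContinuousLinearMap.units_inv_apply_of_apply_eq_smul (hμ0 i) (hμ i))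
    (fun i => by simpa only [norm_inv] using inv_le_one_of_one_le₀ (hμ_norm i))

end Eigenbasis

theorem differentiableAt_iterate {𝕜 E : Type*} [NontriviallyNormedField 𝕜] [NormedAddCommGroup E]
    [NormedSpace 𝕜 E] {f : E → E} {z : E} (hf : ∀ j, DifferentiableAt 𝕜 f (f^[j] z)) (n : ℕ) :
    DifferentiableAt 𝕜 f^[n] z := by
  induction n with
  | zero => exact differentiableAt_id
  | succ n ih => rw [Function.iterate_succ']; exact (hf n).comp z ih

section Cesaro

variable {𝕜 E : Type*} [RCLike 𝕜] [NormedAddCommGroup E] [NormedSpace 𝕜 E]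
  (u : (E →L[𝕜] E)ˣ) (f : E → E)

def cesaroAverage (N : ℕ) (z : E) : E :=
  (N : 𝕜)⁻¹ • ∑ j ∈ Finset.range N, (↑(u⁻¹ ^ j) : E →L[𝕜] E) (f^[j] z)

variable {u f}

theorem cesaroAverage_apply_zero (hf0 : f 0 = 0) (N : ℕ) : cesaroAverage u f N 0 = 0 := by
  simp [cesaroAverage, Function.iterate_fixed hf0]

theorem norm_cesaroAverage_le {z : E} {M : ℝ}
    (hM : ∀ j, ‖(↑(u⁻¹ ^ j) : E →L[𝕜] E) (f^[j] z)‖ ≤ M) (N : ℕ) :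
    ‖cesaroAverage u f N z‖ ≤ M := by
  rcases Nat.eq_zero_or_pos N with rfl | hN
  · simpa [cesaroAverage] using (norm_nonneg _).trans (hM 0)
  calc ‖cesaroAverage u f N z‖
      ≤ (N : ℝ)⁻¹ * ∑ j ∈ Finset.range N, ‖(↑(u⁻¹ ^ j) : E →L[𝕜] E) (f^[j] z)‖ := by
        rw [cesaroAverage, norm_smul, norm_inv, RCLike.norm_natCast]
        gcongr
        exact norm_sum_le _ _
    _ ≤ (N : ℝ)⁻¹ * (N * M) := by
        gcongr
        simpa only [Finset.card_range, nsmul_eq_mul] using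
          Finset.sum_le_card_nsmul (Finset.range N) _ M fun j _ => hM j
    _ = M := by field_simp

theorem cesaroAverage_comp_sub (N : ℕ) (z : E) :
    cesaroAverage u f N (f z) - (u : E →L[𝕜] E) (cesaroAverage u f N z) =
      (N : 𝕜)⁻¹ • (u : E →L[𝕜] E) ((↑(u⁻¹ ^ N) : E →L[𝕜] E) (f^[N] z) - z) := by
  set g : ℕ → E := fun j => (↑(u⁻¹ ^ j) : E →L[𝕜] E) (f^[j] z)
  have hshift (j : ℕ) :
      (↑(u⁻¹ ^ j) : E →L[𝕜] E) (f^[j] (f z)) = (u : E →L[𝕜] E) (g (j + 1)) := by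
    rw [← Function.iterate_succ_apply, ← mul_apply_eq_comp, ← Units.val_mul, pow_succ',
      mul_inv_cancel_left]
  rw [cesaroAverage, cesaroAverage, map_smul, ← smul_sub]
  simp_rw [hshift]
  rw [← map_sum, ← map_sub, ← Finset.sum_sub_distrib, Finset.sum_range_sub]
  simp [g]

theorem tendsto_cesaroAverage_comp_sub {z : E} {M : ℝ}
    (hM : ∀ j, ‖(↑(u⁻¹ ^ j) : E →L[𝕜] E) (f^[j] z)‖ ≤ M) :
    Tendsto (fun N => cesaroAverage u f N (f z) - (u : E →L[𝕜] E) (cesaroAverage u f N z))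
      atTop (𝓝 0) := by
  simp only [cesaroAverage_comp_sub]
  refine squeeze_zero_norm (a := fun N : ℕ => (N : ℝ)⁻¹ * (‖(u : E →L[𝕜] E)‖ * (M + ‖z‖)))
    (fun N => ?_) (by simpa using (tendsto_inv_atTop_nhds_zero_nat (𝕜 := ℝ)).mul_const _)
  rw [norm_smul, norm_inv, RCLike.norm_natCast]
  gcongr
  exact (u : E →L[𝕜] E).le_opNorm_of_le ((norm_sub_le _ _).trans (by linarith [hM N]))

theorem differentiableAt_cesaroAverage {z : E} (hf : ∀ j, DifferentiableAt 𝕜 f (f^[j] z))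
    (N : ℕ) : DifferentiableAt 𝕜 (cesaroAverage u f N) z :=
  (DifferentiableAt.fun_sum fun j _ => (ContinuousLinearMap.differentiableAt _).comp z
    (differentiableAt_iterate hf j)).const_smul _

theorem hasFDerivAt_cesaroAverage {x : E} (hf : HasFDerivAt f (u : E →L[𝕜] E) x) (hx : f x = x)
    {N : ℕ} (hN : N ≠ 0) : HasFDerivAt (cesaroAverage u f N) (ContinuousLinearMap.id 𝕜 E) x := by
  have hterm : ∀ j, HasFDerivAt (fun z => (↑(u⁻¹ ^ j) : E →L[𝕜] E) (f^[j] z))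
      (ContinuousLinearMap.id 𝕜 E) x := fun j => by
    have := ((↑(u⁻¹ ^ j) : E →L[𝕜] E).hasFDerivAt (x := f^[j] x)).comp x (hf.iterate hx j)
    rwa [← ContinuousLinearMap.mul_def, ← Units.val_pow_eq_pow_val, ← Units.val_mul, inv_pow,
      inv_mul_cancel, Units.val_one] at this
  have hsum : HasFDerivAt (fun z => ∑ j ∈ Finset.range N, (↑(u⁻¹ ^ j) : E →L[𝕜] E) (f^[j] z))
      (∑ _j ∈ Finset.range N, ContinuousLinearMap.id 𝕜 E) x :=
    HasFDerivAt.fun_sum fun j _ => hterm j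
  convert hsum.const_smul (N : 𝕜)⁻¹ using 1
  · rfl
  rw [Finset.sum_const, Finset.card_range, ← Nat.cast_smul_eq_nsmul 𝕜, smul_smul,
    inv_mul_cancel₀ (Nat.cast_ne_zero.2 hN), one_smul]

end Cesaro

theorem exists_linearization_of_norm_iterate_le {E : Type*} [NormedAddCommGroup E]
    [NormedSpace ℂ E] [ProperSpace E] {f : E → E} {u : (E →L[ℂ] E)ˣ} {r R C : ℝ} (hr : 0 < r)
    (hf0 : f 0 = 0) (hfu : HasFDerivAt f (u : E →L[ℂ] E) 0)
    (hf : ∀ z ∈ ball (0 : E) r, ∀ j, DifferentiableAt ℂ f (f^[j] z))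
    (horbit : ∀ z ∈ ball (0 : E) r, ∀ j, ‖f^[j] z‖ ≤ R)
    (hC : ∀ j, ‖(↑(u⁻¹ ^ j) : E →L[ℂ] E)‖ ≤ C) :
    ∃ h : E → E, (∀ z ∈ ball (0 : E) (r / 8), DifferentiableAt ℂ h z) ∧ h 0 = 0 ∧
      fderiv ℂ h 0 = ContinuousLinearMap.id ℂ E ∧
      ∀ z ∈ ball (0 : E) r, f z ∈ ball (0 : E) r → h (f z) = (u : E →L[ℂ] E) (h z) := by
  have hbound : ∀ z ∈ ball (0 : E) r, ∀ j, ‖(↑(u⁻¹ ^ j) : E →L[ℂ] E) (f^[j] z)‖ ≤ C * R :=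
    fun z hz j => ContinuousLinearMap.le_of_opNorm_le _ (hC j) _ |>.trans
      (mul_le_mul_of_nonneg_left (horbit z hz j) ((norm_nonneg _).trans (hC 0)))
  obtain ⟨𝒰, h𝒰⟩ := Ultrafilter.exists_le (atTop : Filter ℕ)
  obtain ⟨h, hlim, hdiff⟩ := Ultrafilter.exists_tendsto_fderiv_of_forall_norm_le 𝒰 hr
    (fun N z hz => (differentiableAt_cesaroAverage (u := u) (hf z hz) N).differentiableWithinAt)
    (fun N z hz => norm_cesaroAverage_le (hbound z hz) N)
  refine ⟨h, fun z hz => (hdiff z hz).1, ?_, ?_, fun z hz hfz => ?_⟩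
  · refine tendsto_nhds_unique (hlim 0 (mem_ball_self hr)) ?_
    simp [cesaroAverage_apply_zero hf0]
  · refine tendsto_nhds_unique (hdiff 0 (mem_ball_self (by positivity))).2 ?_
    exact tendsto_const_nhds.congr' (Eventually.mono (h𝒰 (eventually_ne_atTop 0)) fun N hN =>
      (hasFDerivAt_cesaroAverage hfu hf0 hN).fderiv.symm)
  · refine sub_eq_zero.1 (tendsto_nhds_unique ((hlim _ hfz).sub
      (((u : E →L[ℂ] E).continuous.tendsto _).comp (hlim z hz))) ?_)
    exact (tendsto_cesaroAverage_comp_sub (hbound z hz)).mono_left h𝒰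

theorem stmt9_general {k : ℕ} (U : Set (Fin k → ℂ)) (f : (Fin k → ℂ) → (Fin k → ℂ))
    (r R : ℝ)
    (hUopen : IsOpen U)
    (hf : DifferentiableOn ℂ f U) (hf0 : f 0 = 0)
    (hA : IsUnit (fderiv ℂ f 0))
    (heig : ∀ μ ∈ spectrum ℂ (fderiv ℂ f 0), ‖μ‖ = 1)
    (hdiag : ∃ b : Module.Basis (Fin k) ℂ (Fin k → ℂ),
      ∀ i, ∃ μ : ℂ, fderiv ℂ f 0 (b i) = μ • b i)
    (hr : 0 < r) (hrR : r < R) (hRU : closedBall (0 : Fin k → ℂ) R ⊆ U)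
    (horbit : ∀ n : ℕ, f^[n] '' closedBall (0 : Fin k → ℂ) r ⊆
      closedBall (0 : Fin k → ℂ) R) :
    ∃ h : (Fin k → ℂ) → (Fin k → ℂ), ∃ r' > (0:ℝ), ∃ ε > (0:ℝ), ε ≤ r' ∧
      DifferentiableOn ℂ h (ball (0 : Fin k → ℂ) r') ∧
      MapsTo f (ball (0 : Fin k → ℂ) ε) (ball (0 : Fin k → ℂ) r') ∧
      h 0 = 0 ∧ fderiv ℂ h 0 = ContinuousLinearMap.id ℂ (Fin k → ℂ) ∧
      ∀ z ∈ ball (0 : Fin k → ℂ) ε, h (f z) = fderiv ℂ f 0 (h z) := by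
  obtain ⟨u, hu⟩ := hA
  obtain ⟨b, hb⟩ := hdiag
  rw [← hu] at heig hb ⊢
  obtain ⟨C, hC⟩ := b.exists_norm_units_inv_pow_le hb fun μ hμ => (heig μ hμ).ge
  have hfR : ∀ w ∈ closedBall (0 : Fin k → ℂ) R, DifferentiableAt ℂ f w := fun w hw =>
    hf.differentiableAt (hUopen.mem_nhds (hRU hw))
  have horb : ∀ z ∈ ball (0 : Fin k → ℂ) r, ∀ j, f^[j] z ∈ closedBall 0 R :=
    fun z hz j => horbit j ⟨z, ball_subset_closedBall hz, rfl⟩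
  have hfu : HasFDerivAt f (u : (Fin k → ℂ) →L[ℂ] (Fin k → ℂ)) 0 :=
    hu ▸ (hfR 0 (mem_closedBall_self (hr.trans hrR).le)).hasFDerivAt
  obtain ⟨h, hdiff, hh0, hDh0, hconj⟩ := exists_linearization_of_norm_iterate_le hr hf0 hfu
    (fun z hz j => hfR _ (horb z hz j)) (fun z hz j => mem_closedBall_zero_iff.1 (horb z hz j)) hC
  have hball : ball (0 : Fin k → ℂ) (r / 8) ∈ 𝓝 (f 0) := by
    rw [hf0]; exact ball_mem_nhds 0 (by positivity)
  obtain ⟨ε, hε, hfε⟩ := Metric.mem_nhds_iff.1 (hfu.continuousAt.preimage_mem_nhds hball)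
  have hr8 : ball (0 : Fin k → ℂ) (r / 8) ⊆ ball 0 r := ball_subset_ball (by linarith)
  refine ⟨h, r / 8, by positivity, min ε (r / 8), lt_min hε (by positivity), min_le_right _ _,
    fun z hz => (hdiff z hz).differentiableWithinAt,
    fun z hz => hfε (ball_subset_ball (min_le_left _ _) hz), hh0, hDh0, fun z hz => ?_⟩
  exact hconj z (hr8 (ball_subset_ball (min_le_right _ _) hz))
    (hr8 (hfε (ball_subset_ball (min_le_left _ _) hz)))

/-- Linearization: let `f` be holomorphic on a bounded open `U ∋ 0` in `ℂ^k` with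
`f 0 = 0`, `A = Df(0)` invertible, diagonalizable, with all eigenvalues of modulus
`1`, and suppose all forward iterates of `f` map `B(0,r)` into `B(0,R) ⊆ U`. Then `f`
is linearizable near `0`: there is a holomorphic `h` near `0` with `h 0 = 0`,
`Dh(0) = Id` and `h ∘ f = A ∘ h`. -/
theorem stmt9 {k : ℕ} (U : Set (Fin k → ℂ)) (f : (Fin k → ℂ) → (Fin k → ℂ))
    (r R : ℝ)
    (hUopen : IsOpen U) (hUbdd : Bornology.IsBounded U)
    (h0U : (0 : Fin k → ℂ) ∈ U)
    (hf : DifferentiableOn ℂ f U) (hf0 : f 0 = 0)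
    (hA : IsUnit (fderiv ℂ f 0))
    (heig : ∀ μ ∈ spectrum ℂ (fderiv ℂ f 0), ‖μ‖ = 1)
    (hdiag : ∃ b : Module.Basis (Fin k) ℂ (Fin k → ℂ),
      ∀ i, ∃ μ : ℂ, fderiv ℂ f 0 (b i) = μ • b i)
    (hr : 0 < r) (hrR : r < R) (hRU : closedBall (0 : Fin k → ℂ) R ⊆ U)
    (horbit : ∀ n : ℕ, f^[n] '' closedBall (0 : Fin k → ℂ) r ⊆
      closedBall (0 : Fin k → ℂ) R) :
    ∃ h : (Fin k → ℂ) → (Fin k → ℂ), ∃ r' > (0:ℝ), ∃ ε > (0:ℝ), ε ≤ r' ∧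
      DifferentiableOn ℂ h (ball (0 : Fin k → ℂ) r') ∧
      MapsTo f (ball (0 : Fin k → ℂ) ε) (ball (0 : Fin k → ℂ) r') ∧
      h 0 = 0 ∧ fderiv ℂ h 0 = ContinuousLinearMap.id ℂ (Fin k → ℂ) ∧
      ∀ z ∈ ball (0 : Fin k → ℂ) ε, h (f z) = fderiv ℂ f 0 (h z) :=
  stmt9_general U f r R hUopen hf hf0 hA heig hdiag hr hrR hRU horbit
end
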